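/- Let 𝔤 be a compact semisimple real Lie algebra. For every A ∈ 𝔤 there exists a Cartan subalgebra 𝔥 with 𝔥 ⊆ A^⊥ (orthogonal w.r.t. the Killing form); equivalently, A lies in [X,𝔤] for some regular X. -/

import Mathlib

open LieAlgebra

/-- A Cartan subalgebra of a compact Lie algebra: a maximal abelian Lie subalgebra. -/
def IsCSA {L : Type*} [LieRing L] [LieAlgebra ℝ L] (H : LieSubalgebra ℝ L) : Prop :=
  IsLieAbelian H ∧ ∀ H' : LieSubalgebra ℝ L, IsLieAbelian H' → H ≤ H' → H = H'


/-- The centralizer of an element, as a Lie subalgebra. -/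
def cenAlg {L : Type*} [LieRing L] [LieAlgebra ℝ L] (X : L) : LieSubalgebra ℝ L where
  carrier := {Y | ⁅Y, X⁆ = 0}
  add_mem' := by intro a b ha hb; simp only [Set.mem_setOf_eq] at *; rw [add_lie, ha, hb, add_zero]
  zero_mem' := by simp
  smul_mem' := by intro c a ha; simp only [Set.mem_setOf_eq] at *; rw [smul_lie, ha, smul_zero]
  lie_mem' := by
    intro a b ha hb; simp only [Set.mem_setOf_eq] at *
    rw [lie_lie, ha, hb, lie_zero, lie_zero, sub_zero]

/-- An element is regular if its centralizer is a Cartan subalgebra. -/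
def IsRegularElt {L : Type*} [LieRing L] [LieAlgebra ℝ L] (X : L) : Prop := IsCSA (cenAlg X)

open NormedSpace RealInnerProductSpace

section AuxCompact
variable {V : Type*} [NormedAddCommGroup V] [InnerProductSpace ℝ V] [FiniteDimensional ℝ V]

lemma expFlow_hasDerivAt (D : V →L[ℝ] V) (x : V) (t : ℝ) :
    HasDerivAt (fun s : ℝ => exp (s • D) x) (D (exp (t • D) x)) t := by
  have h1 : HasDerivAt (fun s : ℝ => exp (s • D)) (D * exp (t • D)) t :=
    hasDerivAt_exp_smul_const' D t
  have h2 := h1.clm_apply (hasDerivAt_const t x)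
  simpa using h2

lemma skew_range_eq_ker_orthogonal (S : V →ₗ[ℝ] V)
    (hS : ∀ x y : V, ⟪S x, y⟫ = -⟪x, S y⟫) :
    LinearMap.range S = (LinearMap.ker S)ᗮ := by
  have hle : LinearMap.range S ≤ (LinearMap.ker S)ᗮ := by
    rintro _ ⟨x, rfl⟩
    intro u hu
    have : ⟪S x, u⟫ = 0 := by
      rw [hS]
      rw [show S u = 0 from hu]
      simp
    rwa [real_inner_comm] at this
  apply Submodule.eq_of_le_of_finrank_le hle
  have h1 := Submodule.finrank_add_finrank_orthogonal (K := LinearMap.ker S)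
  have h2 := LinearMap.finrank_range_add_finrank_ker S
  omega

omit [FiniteDimensional ℝ V] in
lemma trace_eq_sum_inner_onb {ι : Type*} [Fintype ι] [DecidableEq ι]
    (b : OrthonormalBasis ι ℝ V) (M : V →ₗ[ℝ] V) :
    LinearMap.trace ℝ V M = ∑ i, ⟪b i, M (b i)⟫ := by
  rw [LinearMap.trace_eq_matrix_trace ℝ b.toBasis, Matrix.trace]
  congr 1
  ext i
  rw [Matrix.diag_apply, LinearMap.toMatrix_apply, OrthonormalBasis.coe_toBasis_repr_apply,
    OrthonormalBasis.repr_apply_apply, OrthonormalBasis.coe_toBasis]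

lemma core_min (bc : V →L[ℝ] V →L[ℝ] V)
    (halt : ∀ x y : V, bc x y = -bc y x)
    (hjac : ∀ x y z : V, bc x (bc y z) = bc (bc x y) z + bc y (bc x z))
    (hskew : ∀ x y z : V, ⟪bc x y, z⟫ = -⟪y, bc x z⟫)
    (htr : ∀ x y : V, LinearMap.trace ℝ V ((bc x : V →ₗ[ℝ] V) ∘ₗ (bc y : V →ₗ[ℝ] V)) = -⟪x, y⟫)
    (H₀ : Submodule ℝ V) (habel : ∀ x ∈ H₀, ∀ y ∈ H₀, bc x y = 0)
    (B : V)
    (hmin : ∀ (E : V) (t : ℝ),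
      ‖(H₀.orthogonalProjection B : V)‖ ≤ ‖(H₀.orthogonalProjection (exp (t • bc E) B) : V)‖) :
    (H₀.orthogonalProjection B : V) = 0 := by
  set P : V →L[ℝ] V := H₀.subtypeL.comp (H₀.orthogonalProjection) with hPdef
  have hPapply : ∀ v, P v = (H₀.orthogonalProjection v : V) := fun v => rfl
  set h : V := P B with hhdef
  have hhH : h ∈ H₀ := Submodule.coe_mem _
  have hPh : ∀ (w z : V), w ∈ H₀ → ⟪w, P z⟫ = ⟪w, z⟫ := by
    intro w z hw
    have hmem : z - P z ∈ H₀ᗮ := Submodule.sub_starProjection_mem_orthogonal (K := H₀) z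
    have := hmem w hw
    have hexp : ⟪w, z⟫ = ⟪w, P z⟫ + ⟪w, z - P z⟫ := by
      rw [← inner_add_right]
      rw [add_sub_cancel]
    rw [hexp, this, add_zero]
  have hPzero : ∀ z : V, z ∈ H₀ᗮ → P z = 0 := by
    intro z hz
    have : H₀.orthogonalProjection z = 0 := Submodule.orthogonalProjectionOnto_eq_zero_iff.mpr hz
    rw [hPapply, this]; rfl
  -- the flow and the function f for a direction E
  have hu : ∀ (E : V) (t : ℝ), HasDerivAt (fun s : ℝ => exp (s • bc E) B)
      (bc E (exp (t • bc E) B)) t := fun E t => expFlow_hasDerivAt (bc E) B t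
  set u : V → ℝ → V := fun E t => exp (t • bc E) B with hudef
  set f : V → ℝ → ℝ := fun E t => ⟪P (u E t), P (u E t)⟫ with hfdef
  have hPu : ∀ (E : V) (t : ℝ), HasDerivAt (fun s => P (u E s)) (P (bc E (u E t))) t :=
    fun E t => P.hasFDerivAt.comp_hasDerivAt t (hu E t)
  have hPbcu : ∀ (E : V) (t : ℝ),
      HasDerivAt (fun s => P (bc E (u E s))) (P (bc E (bc E (u E t)))) t :=
    fun E t => (P.comp (bc E)).hasFDerivAt.comp_hasDerivAt t (hu E t)
  have hf : ∀ (E : V) (t : ℝ), HasDerivAt (f E)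
      (⟪P (u E t), P (bc E (u E t))⟫ + ⟪P (bc E (u E t)), P (u E t)⟫) t :=
    fun E t => (hPu E t).inner ℝ (hPu E t)
  have hu0 : ∀ E : V, u E 0 = B := by intro E; simp [hudef, exp_zero]
  have hfmin : ∀ (E : V) (t : ℝ), f E 0 ≤ f E t := by
    intro E t
    have := hmin E t
    rw [hfdef]
    simp only [hu0]
    rw [real_inner_self_eq_norm_mul_norm, real_inner_self_eq_norm_mul_norm]
    rw [← hPapply, ← hPapply] at this
    exact mul_le_mul this this (norm_nonneg _) (norm_nonneg _)
  -- first order condition : bc B h = 0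
  have hd1 : ∀ E : V, ⟪h, bc E B⟫ = 0 := by
    intro E
    have hloc : IsLocalMin (f E) 0 := Filter.Eventually.of_forall (fun t => hfmin E t)
    have hz := hloc.hasDerivAt_eq_zero (hf E 0)
    rw [hu0] at hz
    have hcm : ⟪P B, P (bc E B)⟫ = ⟪P (bc E B), P B⟫ := real_inner_comm _ _
    have h2 : ⟪P (bc E B), P B⟫ = 0 := by linarith
    have h3 : ⟪h, P (bc E B)⟫ = 0 := by
      rw [real_inner_comm]; exact h2
    rwa [hPh _ _ hhH] at h3
  have hBh : bc B h = 0 := by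
    have key : ∀ E : V, ⟪bc B h, E⟫ = 0 := by
      intro E
      have h1 : ⟪bc B h, E⟫ = -⟪h, bc B E⟫ := hskew B h E
      rw [h1, halt B E]
      simp only [map_neg, inner_neg_right, neg_neg, ContinuousLinearMap.neg_apply]
      exact hd1 E
    have := key (bc B h)
    exact inner_self_eq_zero.mp this
  -- suppose h ≠ 0
  by_contra hh0
  have hh0' : h ≠ 0 := hh0
  have hhB : bc h B = 0 := by rw [halt, hBh, neg_zero]
  have hcommOp : ∀ z : V, bc h (bc B z) = bc B (bc h z) := by
    intro z
    have := hjac h B z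
    rw [hhB] at this
    simpa using this
  set W : Submodule ℝ V := LinearMap.ker ((bc h : V →ₗ[ℝ] V)) with hWdef
  have hmemW : ∀ z : V, z ∈ W ↔ bc h z = 0 := by
    intro z; rw [hWdef, LinearMap.mem_ker]; rfl
  have hH₀W : H₀ ≤ W := by
    intro w hw
    rw [hmemW]
    exact habel h hhH w hw
  have hrange : LinearMap.range ((bc h : V →ₗ[ℝ] V)) = Wᗮ :=
    skew_range_eq_ker_orthogonal _ (fun x y => hskew h x y)
  -- trace argument: find e with ⟪bc h e, bc B e⟫ > 0
  classical
  have hex : ∃ e : V, 0 < ⟪bc h e, bc B e⟫ := by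
    set b := stdOrthonormalBasis ℝ V with hb
    have hsum : ∑ i, ⟪bc h (b i), bc B (b i)⟫ = ⟪h, h⟫ := by
      have h1 : ∀ i, ⟪bc h (b i), bc B (b i)⟫
          = -⟪b i, ((bc h : V →ₗ[ℝ] V) ∘ₗ (bc B : V →ₗ[ℝ] V)) (b i)⟫ := by
        intro i
        have hcv : ((bc h : V →ₗ[ℝ] V) ∘ₗ (bc B : V →ₗ[ℝ] V)) (b i) = bc h (bc B (b i)) := rfl
        rw [hcv]
        exact hskew h (b i) (bc B (b i))
      rw [Finset.sum_congr rfl (fun i _ => h1 i), Finset.sum_neg_distrib,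
        ← trace_eq_sum_inner_onb b, htr h B, neg_neg]
      exact (hPh h B hhH).symm
    have hpos : (0 : ℝ) < ∑ i, ⟪bc h (b i), bc B (b i)⟫ := by
      rw [hsum]
      rw [real_inner_self_eq_norm_sq]
      have : ‖h‖ ≠ 0 := norm_ne_zero_iff.mpr hh0'
      positivity
    by_contra hno
    push_neg at hno
    have : ∑ i, ⟪bc h (b i), bc B (b i)⟫ ≤ 0 :=
      Finset.sum_nonpos (fun i _ => hno (b i))
    linarith
  obtain ⟨e, he⟩ := hex
  -- decompose e
  set eW : V := (W.orthogonalProjection e : V) with heW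
  set E : V := e - eW with hEdef
  have hEmem : E ∈ Wᗮ := Submodule.sub_starProjection_mem_orthogonal (K := W) e
  have hbhW : bc h eW = 0 := by
    rw [← hmemW]; exact Submodule.coe_mem _
  have hbBW : bc B eW ∈ W := by
    rw [hmemW, hcommOp, hbhW, map_zero]
  have hEpos : 0 < ⟪bc h E, bc B E⟫ := by
    have hsplit : bc h e = bc h E := by
      have : e = E + eW := by rw [hEdef]; abel
      rw [this, map_add, hbhW, add_zero]
    have hsplitB : bc B e = bc B E + bc B eW := by
      have : e = E + eW := by rw [hEdef]; abel
      rw [this, map_add]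
    have hcross : ⟪bc h E, bc B eW⟫ = 0 := by
      have hmemr : bc h E ∈ Wᗮ := by
        rw [← hrange]
        exact ⟨E, rfl⟩
      have := hmemr (bc B eW) hbBW
      rwa [real_inner_comm]
    calc (0:ℝ) < ⟪bc h e, bc B e⟫ := he
      _ = ⟪bc h E, bc B E⟫ + ⟪bc h E, bc B eW⟫ := by
          rw [hsplit, hsplitB, inner_add_right]
      _ = ⟪bc h E, bc B E⟫ := by rw [hcross, add_zero]
  -- E lies in range of bc h, hence P (bc E B) = 0
  have hPEB : P (bc E B) = 0 := by
    obtain ⟨x, hx⟩ : ∃ x, (bc h : V →ₗ[ℝ] V) x = E := by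
      rw [← LinearMap.mem_range, hrange]; exact hEmem
    have hx' : bc h x = E := hx
    have hEB : bc E B = bc h (bc x B) := by
      have hjb := hjac h x B
      rw [hhB] at hjb
      simp only [map_zero, add_zero] at hjb
      rw [← hx']
      exact hjb.symm
    apply hPzero
    have hmemr : bc E B ∈ Wᗮ := by
      rw [hEB, ← hrange]; exact ⟨bc x B, rfl⟩
    exact (Submodule.orthogonal_le hH₀W) hmemr
  -- second derivative is negative
  set c : ℝ := ⟪P B, P (bc E (bc E B))⟫ + ⟪P (bc E (bc E B)), P B⟫ with hcdef
  have hcneg : c < 0 := by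
    have h1 : ⟪h, P (bc E (bc E B))⟫ = ⟪h, bc E (bc E B)⟫ := hPh _ _ hhH
    have h2 : ⟪h, bc E (bc E B)⟫ = -⟪bc E h, bc E B⟫ := by
      have := hskew E h (bc E B); linarith
    have h3 : bc E h = -(bc h E) := halt E h
    have h4 : bc E B = -(bc B E) := halt E B
    have : ⟪h, bc E (bc E B)⟫ = -⟪bc h E, bc B E⟫ := by
      rw [h2, h3, h4, inner_neg_neg]
    have hc2 : c = 2 * ⟪h, bc E (bc E B)⟫ := by
      have hcm : ⟪P (bc E (bc E B)), P B⟫ = ⟪P B, P (bc E (bc E B))⟫ := real_inner_comm _ _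
      have hph : ⟪P B, P (bc E (bc E B))⟫ = ⟪h, bc E (bc E B)⟫ := hPh h (bc E (bc E B)) hhH
      rw [hcdef, hcm, hph]; ring
    rw [hc2, this]
    linarith [hEpos]
  -- f₁ : derivative of f E
  set f₁ : ℝ → ℝ := fun t => ⟪P (u E t), P (bc E (u E t))⟫ + ⟪P (bc E (u E t)), P (u E t)⟫
    with hf₁def
  have hf₁0 : f₁ 0 = 0 := by
    rw [hf₁def]
    simp only [hu0, hPEB, inner_zero_right, inner_zero_left, add_zero]
  have hf₁deriv : HasDerivAt f₁ c 0 := by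
    have d1 := (hPu E 0).inner ℝ (hPbcu E 0)
    have d2 := (hPbcu E 0).inner ℝ (hPu E 0)
    have dsum := d1.add d2
    rw [hu0, hPEB] at dsum
    simp only [inner_zero_left, inner_zero_right, add_zero, zero_add] at dsum
    have : ⟪P B, P (bc E (bc E B))⟫ + ⟪P (bc E (bc E B)), P B⟫ = c := by rw [hcdef]
    rwa [this] at dsum
  -- f₁ < 0 on a right neighborhood of 0
  have hslope : Filter.Tendsto (slope f₁ 0) (nhdsWithin 0 {x | x ≠ 0}) (nhds c) :=
    hasDerivAt_iff_tendsto_slope.mp hf₁deriv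
  have hev : ∀ᶠ s in nhdsWithin 0 {x | x ≠ 0}, slope f₁ 0 s < 0 :=
    hslope.eventually_lt_const hcneg
  have hev' : ∀ᶠ s in nhdsWithin 0 (Set.Ioi 0), f₁ s < 0 := by
    have hle : nhdsWithin (0:ℝ) (Set.Ioi 0) ≤ nhdsWithin 0 {x | x ≠ 0} :=
      nhdsWithin_mono 0 (fun x hx => ne_of_gt hx)
    have hev2 := hle hev
    filter_upwards [hev2, self_mem_nhdsWithin] with s hs hs'
    rw [slope_def_field, hf₁0, sub_zero, sub_zero] at hs
    have hspos : (0:ℝ) < s := hs'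
    rcases div_neg_iff.mp hs with ⟨_, hneg⟩ | ⟨hneg, _⟩
    · linarith
    · exact hneg
  obtain ⟨δ, hδmem, hδsub⟩ := mem_nhdsGT_iff_exists_Ioo_subset.mp hev'
  have hδpos : (0:ℝ) < δ := hδmem
  -- f is strictly decreasing on [0, δ/2], contradiction with min at 0
  have hanti : StrictAntiOn (f E) (Set.Icc 0 (δ/2)) := by
    apply strictAntiOn_of_deriv_neg (convex_Icc 0 (δ/2))
    · exact fun t _ => ((hf E t).continuousAt).continuousWithinAt
    · intro t ht
      rw [interior_Icc] at ht
      have hmem : t ∈ Set.Ioo 0 δ := ⟨ht.1, lt_of_lt_of_le ht.2 (by linarith)⟩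
      have : f₁ t < 0 := hδsub hmem
      have hderiv : deriv (f E) t = f₁ t := (hf E t).deriv
      rwa [hderiv]
  have hlt : f E (δ/2) < f E 0 := by
    apply hanti (Set.mem_Icc.mpr ⟨le_refl 0, by linarith⟩)
      (Set.mem_Icc.mpr ⟨by linarith, le_refl _⟩) (by linarith)
  exact absurd (hfmin E (δ/2)) (not_le.mpr hlt)

lemma exp_isometry (D : V →L[ℝ] V) (hD : ∀ x y : V, ⟪D x, y⟫ = -⟪x, D y⟫) (t : ℝ) (x y : V) :
    ⟪exp (t • D) x, exp (t • D) y⟫ = ⟪x, y⟫ := by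
  have key : ∀ s : ℝ, HasDerivAt (fun s : ℝ => ⟪exp (s • D) x, exp (s • D) y⟫) 0 s := by
    intro s
    have := (expFlow_hasDerivAt D x s).inner ℝ (expFlow_hasDerivAt D y s)
    rwa [hD, add_neg_cancel] at this
  have hconst := is_const_of_deriv_eq_zero (f := fun s : ℝ => ⟪exp (s • D) x, exp (s • D) y⟫)
    (fun s => (key s).differentiableAt) (fun s => (key s).deriv) t 0
  simpa using hconst
lemma exp_neg_cancel (D : V →L[ℝ] V) (t : ℝ) (x : V) :
    exp (t • D) (exp (t • (-D)) x) = x := by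
  have h : Commute (t • D) (t • (-D)) := by
    show _ = _
    simp [smul_mul_assoc, mul_smul_comm, mul_neg, neg_mul]
  have h3 := (letI : NormedAlgebra ℚ (V →L[ℝ] V) := .restrictScalars ℚ ℝ _; exp_add_of_commute h)
  rw [smul_neg, add_neg_cancel, exp_zero] at h3
  have h2 : (exp (t • D) * exp (t • (-D))) x = (1 : V →L[ℝ] V) x := by
    rw [show t • (-D) = -(t • D) from smul_neg t D, ← h3]
  simpa [ContinuousLinearMap.mul_apply] using h2

lemma exp_automorphism (bc : V →L[ℝ] V →L[ℝ] V) (E : V)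
    (hder : ∀ x y : V, bc E (bc x y) = bc (bc E x) y + bc x (bc E y)) (t : ℝ) (x y : V) :
    exp (t • bc E) (bc x y) = bc (exp (t • bc E) x) (exp (t • bc E) y) := by
  set D := bc E with hDdef
  have hg : ∀ s : ℝ, HasDerivAt
      (fun s : ℝ => exp (s • (-D)) (bc (exp (s • D) x) (exp (s • D) y))) 0 s := by
    intro s
    have hc : HasDerivAt (fun s : ℝ => exp (s • (-D))) ((-D) * exp (s • (-D))) s :=
      hasDerivAt_exp_smul_const' (-D) s
    have hu := expFlow_hasDerivAt D x s
    have hv := expFlow_hasDerivAt D y s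
    have hbu : HasDerivAt (fun s : ℝ => bc (exp (s • D) x))
        (bc (D (exp (s • D) x))) s := bc.hasFDerivAt.comp_hasDerivAt s hu
    have hw : HasDerivAt (fun s : ℝ => bc (exp (s • D) x) (exp (s • D) y))
        (bc (D (exp (s • D) x)) (exp (s • D) y)
          + bc (exp (s • D) x) (D (exp (s • D) y))) s := hbu.clm_apply hv
    have hfull := hc.clm_apply hw
    set ux := exp (s • D) x
    set uy := exp (s • D) y
    have hDcomm : Commute (D : V →L[ℝ] V) (s • (-D)) := by
      show _ = _
      simp [smul_mul_assoc, mul_smul_comm, mul_neg, neg_mul]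
    have hcomm : Commute (D : V →L[ℝ] V) (exp (s • (-D))) := Commute.exp_right hDcomm
    have hder' : D (bc ux uy) = bc (D ux) uy + bc ux (D uy) := hder ux uy
    have hz : ((-D) * exp (s • (-D))) (bc ux uy)
        + exp (s • (-D)) (bc (D ux) uy + bc ux (D uy)) = 0 := by
      rw [← hder']
      have hh : ((-D) * exp (s • (-D))) = -(exp (s • (-D)) * D) := by
        rw [neg_mul, hcomm.eq]
      rw [hh]
      simp [ContinuousLinearMap.mul_apply]
    rwa [hz] at hfull
  have hconst := is_const_of_deriv_eq_zero
    (f := fun s : ℝ => exp (s • (-D)) (bc (exp (s • D) x) (exp (s • D) y)))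
    (fun s => (hg s).differentiableAt) (fun s => (hg s).deriv) t 0
  simp only [zero_smul, exp_zero, ContinuousLinearMap.one_apply] at hconst
  have h2 := congrArg (fun z => exp (t • D) z) hconst
  rw [exp_neg_cancel] at h2
  exact h2.symm
lemma generic_kernel (S T : V →ₗ[ℝ] V)
    (hST : S ∘ₗ T = T ∘ₗ S)
    (hS : ∀ x y : V, ⟪S x, y⟫ = -⟪x, S y⟫) (hT : ∀ x y : V, ⟪T x, y⟫ = -⟪x, T y⟫) :
    ∃ t : ℝ, LinearMap.ker (S + t • T) = LinearMap.ker S ⊓ LinearMap.ker T := by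
  by_contra hcon
  push_neg at hcon
  set K : Submodule ℝ V := LinearMap.ker S ⊓ LinearMap.ker T with hKdef
  have hKle : ∀ t : ℝ, K ≤ LinearMap.ker (S + t • T) := by
    intro t v hv
    obtain ⟨h1, h2⟩ := Submodule.mem_inf.mp hv
    simp only [LinearMap.mem_ker] at h1 h2 ⊢
    simp [LinearMap.add_apply, h1, h2]
  -- the "extra" kernel in Kᗮ
  set K' : ℝ → Submodule ℝ V := fun t => LinearMap.ker (S + t • T) ⊓ Kᗮ with hK'def
  have key : ∀ t : ℝ, ∃ v, v ∈ K' t ∧ v ≠ 0 := by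
    intro t
    have hne := hcon t
    have hlt : ∃ v, v ∈ LinearMap.ker (S + t • T) ∧ v ∉ K := by
      by_contra hv
      push_neg at hv
      exact hne (le_antisymm (fun v hv' => hv v hv') (hKle t))
    obtain ⟨v, hv1, hv2⟩ := hlt
    refine ⟨v - (K.orthogonalProjection v : V), ?_, ?_⟩
    · refine Submodule.mem_inf.mpr ⟨?_, Submodule.sub_starProjection_mem_orthogonal (K := K) v⟩
      have hPK : ((K.orthogonalProjection v : V)) ∈ K := Submodule.coe_mem _
      have : (S + t • T) ((K.orthogonalProjection v : V)) = 0 := hKle t hPK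
      simp only [LinearMap.mem_ker, map_sub] at hv1 ⊢
      rw [hv1, this, sub_zero]
    · intro h0
      apply hv2
      have : v = (K.orthogonalProjection v : V) := by
        rwa [sub_eq_zero] at h0
      rw [this]; exact Submodule.coe_mem _
  -- T preserves K' t and is injective on it
  have hTK' : ∀ t : ℝ, ∀ v ∈ K' t, T v ∈ K' t := by
    intro t v hv
    obtain ⟨h1, h2⟩ := Submodule.mem_inf.mp hv
    refine Submodule.mem_inf.mpr ⟨?_, ?_⟩
    · simp only [LinearMap.mem_ker] at h1 ⊢
      have hcomm : (S + t • T) (T v) = T ((S + t • T) v) := by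
        have := LinearMap.congr_fun hST v
        simp only [LinearMap.comp_apply] at this
        simp [LinearMap.add_apply, this, map_smul]
      rw [hcomm, h1, map_zero]
    · intro w hw
      have hTw : T w = 0 := (Submodule.mem_inf.mp hw).2
      have h := hT v w
      rw [hTw] at h
      simp only [inner_zero_right, neg_zero] at h
      calc ⟪w, T v⟫ = ⟪T v, w⟫ := real_inner_comm _ _
        _ = 0 := h
  have hTinj : ∀ t : ℝ, ∀ v ∈ K' t, T v = 0 → v = 0 := by
    intro t v hv hTv
    obtain ⟨h1, h2⟩ := Submodule.mem_inf.mp hv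
    have hSv : S v = 0 := by
      have := h1
      simp only [LinearMap.mem_ker, LinearMap.add_apply, LinearMap.smul_apply] at this
      rw [hTv] at this
      simpa using this
    have hvK : v ∈ K := Submodule.mem_inf.mpr ⟨by simpa [LinearMap.mem_ker] using hSv,
      by simpa [LinearMap.mem_ker] using hTv⟩
    have hmem : v ∈ K ⊓ Kᗮ := Submodule.mem_inf.mpr ⟨hvK, h2⟩
    rw [Submodule.inf_orthogonal_eq_bot] at hmem
    simpa using hmem
  -- T is surjective on K' t
  have hTsurj : ∀ t : ℝ, ∀ v ∈ K' t, ∃ u ∈ K' t, T u = v := by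
    intro t v hv
    have hmem : ∀ x ∈ K' t, T x ∈ K' t := hTK' t
    set Tr : K' t →ₗ[ℝ] K' t := T.restrict hmem with hTr
    have hinj : Function.Injective Tr := by
      rw [← LinearMap.ker_eq_bot]
      rw [Submodule.eq_bot_iff]
      rintro ⟨x, hx⟩ hker
      have h0 := congrArg (Subtype.val) ((LinearMap.mem_ker).mp hker)
      exact Subtype.ext (hTinj t x hx h0)
    have hsurj : Function.Surjective Tr := LinearMap.injective_iff_surjective.mp hinj
    obtain ⟨⟨u, hu⟩, hTu⟩ := hsurj ⟨v, hv⟩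
    exact ⟨u, hu, by simpa [hTr, LinearMap.restrict_apply] using congrArg Subtype.val hTu⟩
  -- orthogonality across distinct parameters
  have horthT : ∀ t₁ t₂ : ℝ, t₁ ≠ t₂ → ∀ v ∈ K' t₁, ∀ w ∈ K' t₂, ⟪T v, w⟫ = 0 := by
    intro t₁ t₂ hne v hv w hw
    have hSv : S v = -(t₁ • T v) := by
      have := (Submodule.mem_inf.mp hv).1
      simp only [LinearMap.mem_ker, LinearMap.add_apply, LinearMap.smul_apply] at this
      linear_combination (norm := module) this
    have hSw : S w = -(t₂ • T w) := by
      have := (Submodule.mem_inf.mp hw).1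
      simp only [LinearMap.mem_ker, LinearMap.add_apply, LinearMap.smul_apply] at this
      linear_combination (norm := module) this
    have h1 : ⟪S v, w⟫ = -t₁ * ⟪T v, w⟫ := by
      rw [hSv]; simp [inner_smul_left]
    have h2 : ⟪S v, w⟫ = -t₂ * ⟪T v, w⟫ := by
      rw [hS, hSw]
      simp only [inner_neg_right, inner_smul_right]
      rw [hT v w]
      ring
    have : (t₂ - t₁) * ⟪T v, w⟫ = 0 := by linarith [h1.symm.trans h2]
    rcases mul_eq_zero.mp this with h | h
    · exact absurd (by linarith : t₁ = t₂) hne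
    · exact h
  have horth : ∀ t₁ t₂ : ℝ, t₁ ≠ t₂ → ∀ v ∈ K' t₁, ∀ w ∈ K' t₂, ⟪v, w⟫ = 0 := by
    intro t₁ t₂ hne v hv w hw
    obtain ⟨u, hu, hTu⟩ := hTsurj t₁ v hv
    rw [← hTu]
    exact horthT t₁ t₂ hne u hu w hw
  -- build an orthonormal family indexed by Fin (finrank + 1)
  set n := Module.finrank ℝ V with hn
  have hchoice : ∀ i : Fin (n + 1), ∃ v, v ∈ K' (i : ℝ) ∧ v ≠ 0 := fun i => key _
  choose v hvmem hvne using hchoice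
  set u : Fin (n + 1) → V := fun i => ‖v i‖⁻¹ • v i with hu
  have hON : Orthonormal ℝ u := by
    constructor
    · intro i
      simp only [hu, norm_smul, norm_inv, norm_norm]
      field_simp [norm_ne_zero_iff.mpr (hvne i)]
    · intro i j hij
      have hcast : ((i : ℕ) : ℝ) ≠ ((j : ℕ) : ℝ) := by
        exact_mod_cast fun h => hij (Fin.ext (by exact_mod_cast h))
      simp only [hu, inner_smul_left, inner_smul_right]
      rw [horth _ _ hcast (v i) (hvmem i) (v j) (hvmem j)]
      simp
  have hcard := hON.linearIndependent.fintype_card_le_finrank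
  simpa [hn] using hcard

end AuxCompact

/-- In a compact semisimple real Lie algebra, every `A` is orthogonal to some Cartan
subalgebra; equivalently, `A` lies in `[X, 𝔤]` for some regular `X`. -/
theorem stmt19 (L : Type*) [LieRing L] [LieAlgebra ℝ L] [FiniteDimensional ℝ L]
    (hneg : ∀ x : L, x ≠ 0 → killingForm ℝ L x x < 0) (A : L) :
    (∃ H : LieSubalgebra ℝ L, IsCSA H ∧ ∀ h ∈ H, killingForm ℝ L A h = 0) ∧
    (∃ X : L, IsRegularElt X ∧ A ∈ LinearMap.range (ad ℝ L X)) := by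
  classical
  -- set up the inner product ⟪x,y⟫ = -κ(x,y)
  let cd : InnerProductSpace.Core ℝ L :=
    { inner := fun x y => -killingForm ℝ L x y
      conj_inner_symm := fun x y => by
        simp only [starRingEnd_apply, star_trivial]
        rw [LieModule.traceForm_comm]
      re_inner_nonneg := fun x => by
        rcases eq_or_ne x 0 with h | h
        · simp [h]
        · have := hneg x h
          simp only [RCLike.re_to_real]
          linarith
      add_left := fun x y z => by simp [map_add]; ring
      smul_left := fun x y r => by simp [map_smul]
      definite := fun x hx => by
        by_contra h
        have := hneg x h
        change -killingForm ℝ L x x = 0 at hx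
        linarith [hx] }
  letI : NormedAddCommGroup L := cd.toNormedAddCommGroup
  letI : InnerProductSpace ℝ L := InnerProductSpace.ofCore cd.toCore
  have hinner : ∀ x y : L, ⟪x, y⟫ = -killingForm ℝ L x y := fun x y => rfl
  -- the bracket as a continuous bilinear map
  let bl : L →ₗ[ℝ] L →L[ℝ] L :=
    { toFun := fun x => LinearMap.toContinuousLinearMap (ad ℝ L x)
      map_add' := fun x y => by ext z; simp [map_add]
      map_smul' := fun r x => by ext z; simp [map_smul] }
  let bc : L →L[ℝ] L →L[ℝ] L := LinearMap.toContinuousLinearMap bl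
  have hbc : ∀ x y : L, bc x y = ⁅x, y⁆ := fun x y => by
    simp [bc, bl, LinearMap.coe_toContinuousLinearMap']
  -- basic identities
  have hskewL : ∀ x y z : L, ⟪⁅x, y⁆, z⟫ = -⟪y, ⁅x, z⁆⟫ := by
    intro x y z
    rw [hinner, hinner]
    have h1 : killingForm ℝ L ⁅x, y⁆ z = -killingForm ℝ L y ⁅x, z⁆ := by
      have h2 : (⁅x, y⁆ : L) = -⁅y, x⁆ := by rw [← lie_skew]
      rw [h2, map_neg, LinearMap.neg_apply, LieModule.traceForm_apply_lie_apply]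
    rw [h1, neg_neg]
  have halt : ∀ x y : L, bc x y = -bc y x := by
    intro x y; rw [hbc, hbc, ← lie_skew]
  have hjac : ∀ x y z : L, bc x (bc y z) = bc (bc x y) z + bc y (bc x z) := by
    intro x y z; simp only [hbc]; exact leibniz_lie x y z
  have hskew : ∀ x y z : L, ⟪bc x y, z⟫ = -⟪y, bc x z⟫ := by
    intro x y z; rw [hbc, hbc]; exact hskewL x y z
  have htr : ∀ x y : L,
      LinearMap.trace ℝ L ((bc x : L →ₗ[ℝ] L) ∘ₗ (bc y : L →ₗ[ℝ] L)) = -⟪x, y⟫ := by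
    intro x y
    have h1 : (bc x : L →ₗ[ℝ] L) = (ad ℝ L x : L →ₗ[ℝ] L) := by
      ext z; rw [ContinuousLinearMap.coe_coe, hbc]; rfl
    have h2 : (bc y : L →ₗ[ℝ] L) = (ad ℝ L y : L →ₗ[ℝ] L) := by
      ext z; rw [ContinuousLinearMap.coe_coe, hbc]; rfl
    rw [h1, h2, hinner, neg_neg]
    rfl
  have hadskew : ∀ x : L, ∀ u v : L,
      ⟪(ad ℝ L x : L →ₗ[ℝ] L) u, v⟫ = -⟪u, (ad ℝ L x : L →ₗ[ℝ] L) v⟫ := by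
    intro x u v
    have : (ad ℝ L x : L →ₗ[ℝ] L) u = ⁅x, u⁆ := rfl
    rw [this, show (ad ℝ L x : L →ₗ[ℝ] L) v = ⁅x, v⁆ from rfl]
    exact hskewL x u v
  -- Part 1 : an element X₀ with abelian centralizer, of minimal centralizer dimension
  let kerAd : L → Submodule ℝ L := fun X => LinearMap.ker (ad ℝ L X : L →ₗ[ℝ] L)
  have hdne : (Set.range (fun X : L => Module.finrank ℝ (kerAd X))).Nonempty := ⟨_, ⟨0, rfl⟩⟩
  obtain ⟨X₀, hX₀⟩ : ∃ X₀ : L, Module.finrank ℝ (kerAd X₀)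
      = sInf (Set.range (fun X : L => Module.finrank ℝ (kerAd X))) := Nat.sInf_mem hdne
  have hminrk : ∀ Y : L, Module.finrank ℝ (kerAd X₀) ≤ Module.finrank ℝ (kerAd Y) := by
    intro Y; rw [hX₀]; exact Nat.sInf_le ⟨Y, rfl⟩
  have hmemker : ∀ X Y : L, Y ∈ kerAd X ↔ ⁅X, Y⁆ = 0 := by
    intro X Y
    rw [show kerAd X = LinearMap.ker (ad ℝ L X : L →ₗ[ℝ] L) from rfl, LinearMap.mem_ker]
    exact Iff.rfl
  have hkey : ∀ Y ∈ kerAd X₀, kerAd X₀ ≤ kerAd Y := by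
    intro Y hY
    have hYX : ⁅X₀, Y⁆ = 0 := (hmemker X₀ Y).mp hY
    have hcomm : ((ad ℝ L X₀ : L →ₗ[ℝ] L)) ∘ₗ (ad ℝ L Y : L →ₗ[ℝ] L)
        = (ad ℝ L Y : L →ₗ[ℝ] L) ∘ₗ (ad ℝ L X₀ : L →ₗ[ℝ] L) := by
      ext z
      show ⁅X₀, ⁅Y, z⁆⁆ = ⁅Y, ⁅X₀, z⁆⁆
      have hl := leibniz_lie X₀ Y z
      rw [hYX, zero_lie, zero_add] at hl
      exact hl
    obtain ⟨t, ht⟩ := generic_kernel (ad ℝ L X₀ : L →ₗ[ℝ] L) (ad ℝ L Y : L →ₗ[ℝ] L)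
      hcomm (hadskew X₀) (hadskew Y)
    have hadd : (ad ℝ L X₀ : L →ₗ[ℝ] L) + t • (ad ℝ L Y : L →ₗ[ℝ] L)
        = (ad ℝ L (X₀ + t • Y) : L →ₗ[ℝ] L) := by
      ext z
      show ⁅X₀, z⁆ + t • ⁅Y, z⁆ = ⁅X₀ + t • Y, z⁆
      rw [add_lie, smul_lie]
    rw [hadd] at ht
    have hfr : Module.finrank ℝ (kerAd X₀) ≤ Module.finrank ℝ ↥(kerAd X₀ ⊓ kerAd Y) := by
      have := hminrk (X₀ + t • Y)
      have heq : kerAd (X₀ + t • Y) = kerAd X₀ ⊓ kerAd Y := ht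
      rwa [heq] at this
    have heq2 : kerAd X₀ ⊓ kerAd Y = kerAd X₀ :=
      Submodule.eq_of_le_of_finrank_le inf_le_left hfr
    rw [← heq2]
    exact inf_le_right
  set H₀ : Submodule ℝ L := kerAd X₀ with hH₀def
  have habelL : ∀ x ∈ H₀, ∀ y ∈ H₀, ⁅x, y⁆ = 0 := by
    intro x hx y hy
    exact (hmemker x y).mp (hkey x hx hy)
  have habel : ∀ x ∈ H₀, ∀ y ∈ H₀, bc x y = 0 := by
    intro x hx y hy; rw [hbc]; exact habelL x hx y hy
  -- Part 2 : minimization over the closure of the generated monoid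
  let GoodSet : Set (L →L[ℝ] L) :=
    {g | (∀ x y : L, g (bc x y) = bc (g x) (g y)) ∧ (∀ x y : L, ⟪g x, g y⟫ = ⟪x, y⟫)}
  have hGoodClosed : IsClosed GoodSet := by
    have h1 : GoodSet = (⋂ (x : L) (y : L), {g : L →L[ℝ] L | g (bc x y) = bc (g x) (g y)})
        ∩ (⋂ (x : L) (y : L), {g : L →L[ℝ] L | ⟪g x, g y⟫ = ⟪x, y⟫}) := by
      ext g
      simp only [Set.mem_inter_iff, Set.mem_iInter, Set.mem_setOf_eq]
      exact ⟨fun ⟨h1, h2⟩ => ⟨h1, h2⟩, fun ⟨h1, h2⟩ => ⟨h1, h2⟩⟩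
    rw [h1]
    have hev : ∀ v : L, Continuous (fun g : L →L[ℝ] L => g v) := by
      intro v
      exact (ContinuousLinearMap.apply ℝ L v).continuous
    apply IsClosed.inter
    · apply isClosed_iInter; intro x; apply isClosed_iInter; intro y
      apply isClosed_eq (hev (bc x y))
      have : Continuous fun g : L →L[ℝ] L => (g x, g y) := (hev x).prodMk (hev y)
      exact (bc.continuous₂.comp this)
    · apply isClosed_iInter; intro x; apply isClosed_iInter; intro y
      apply isClosed_eq
      · have : Continuous fun g : L →L[ℝ] L => (g x, g y) := (hev x).prodMk (hev y)
        exact continuous_inner.comp this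
      · exact continuous_const
  let M : Submonoid (L →L[ℝ] L) :=
    Submonoid.closure {g | ∃ (E : L) (t : ℝ), g = exp (t • bc E)}
  have hMGood : (M : Set (L →L[ℝ] L)) ⊆ GoodSet := by
    intro g hg
    induction hg using Submonoid.closure_induction with
    | mem g hgen =>
        obtain ⟨E, t, rfl⟩ := hgen
        constructor
        · intro x y
          exact exp_automorphism bc E (fun x y => hjac E x y) t x y
        · intro x y
          exact exp_isometry (bc E) (fun u v => hskew E u v) t x y
    | one => exact ⟨fun x y => rfl, fun x y => rfl⟩
    | mul a b _ _ ha hb =>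
        refine ⟨fun x y => ?_, fun x y => ?_⟩
        · show a (b (bc x y)) = bc (a (b x)) (a (b y))
          rw [hb.1, ha.1]
        · show ⟪a (b x), a (b y)⟫ = ⟪x, y⟫
          rw [ha.2, hb.2]
  have hGoodNorm : ∀ g ∈ GoodSet, ∀ x : L, ‖g x‖ = ‖x‖ := by
    intro g hg x
    have h1 : ⟪g x, g x⟫ = ⟪x, x⟫ := hg.2 x x
    rw [real_inner_self_eq_norm_mul_norm, real_inner_self_eq_norm_mul_norm] at h1
    nlinarith [norm_nonneg (g x), norm_nonneg x]
  set G : Set (L →L[ℝ] L) := _root_.closure (M : Set (L →L[ℝ] L)) with hGdef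
  have hGGood : G ⊆ GoodSet := closure_minimal hMGood hGoodClosed
  have hGcompact : IsCompact G := by
    apply Metric.isCompact_of_isClosed_isBounded isClosed_closure
    have hsub : G ⊆ Metric.closedBall (0 : L →L[ℝ] L) 1 := by
      intro g hg
      have hgood := hGGood hg
      rw [Metric.mem_closedBall, dist_zero_right]
      refine ContinuousLinearMap.opNorm_le_bound g zero_le_one (fun x => ?_)
      rw [hGoodNorm g hgood x, one_mul]
    exact (Metric.isBounded_closedBall).subset hsub
  have hGne : (1 : L →L[ℝ] L) ∈ G := subset_closure (Submonoid.one_mem M)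
  let P : L →L[ℝ] L := H₀.subtypeL.comp (H₀.orthogonalProjection)
  have hFcont : Continuous (fun g : L →L[ℝ] L => ‖P (g A)‖) := by
    have hev : Continuous (fun g : L →L[ℝ] L => g A) :=
      (ContinuousLinearMap.apply ℝ L A).continuous
    exact continuous_norm.comp (P.continuous.comp hev)
  obtain ⟨g₀, hg₀G, hg₀min⟩ := hGcompact.exists_isMinOn ⟨1, hGne⟩ hFcont.continuousOn
  have hstab : ∀ (E : L) (t : ℝ), exp (t • bc E) * g₀ ∈ G := by
    intro E t
    have hexpM : exp (t • bc E) ∈ M := Submonoid.subset_closure ⟨E, t, rfl⟩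
    have h1 : exp (t • bc E) ∈ M.topologicalClosure := M.le_topologicalClosure hexpM
    have h2 : g₀ ∈ M.topologicalClosure := hg₀G
    exact M.topologicalClosure.mul_mem h1 h2
  -- apply the key minimization lemma
  set B : L := g₀ A with hBdef
  have hminB : ∀ (E : L) (t : ℝ),
      ‖(H₀.orthogonalProjection B : L)‖ ≤ ‖(H₀.orthogonalProjection (exp (t • bc E) B) : L)‖ := by
    intro E t
    have h1 := hg₀min (hstab E t)
    simp only [Set.mem_setOf_eq] at h1
    have h2 : (exp (t • bc E) * g₀) A = exp (t • bc E) B := rfl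
    rw [h2] at h1
    exact h1
  have hB0 : (H₀.orthogonalProjection B : L) = 0 :=
    core_min bc halt hjac hskew htr H₀ habel B hminB
  have hBorth : ∀ w ∈ H₀, ⟪w, B⟫ = 0 := by
    have hmem : B ∈ H₀ᗮ := Submodule.orthogonalProjectionOnto_eq_zero_iff.mp (Submodule.coe_eq_zero.mp hB0)
    intro w hw
    exact hmem w hw
  -- transport back by g₀⁻¹
  have hg₀Good := hGGood hg₀G
  have hg₀inj : Function.Injective g₀ := by
    intro a b hab
    have h1 : g₀ (a - b) = 0 := by rw [map_sub, hab, sub_self]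
    have h2 : ‖a - b‖ = 0 := by rw [← hGoodNorm g₀ hg₀Good (a - b), h1, norm_zero]
    exact sub_eq_zero.mp (norm_eq_zero.mp h2)
  let ee : L ≃ₗ[ℝ] L := LinearEquiv.ofInjectiveEndo (g₀ : L →ₗ[ℝ] L) hg₀inj
  set X : L := ee.symm X₀ with hXdef
  have hgX : g₀ X = X₀ := by
    have h := ee.apply_symm_apply X₀
    exact h
  have hbrk : ∀ x y : L, g₀ ⁅x, y⁆ = ⁅g₀ x, g₀ y⁆ := by
    intro x y
    have h := hg₀Good.1 x y
    rwa [hbc, hbc] at h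
  have hflip : ∀ a b : L, ⁅a, b⁆ = (0 : L) ↔ ⁅b, a⁆ = 0 := by
    intro a b
    rw [← lie_skew a b, neg_eq_zero]
  have hcen : ∀ Y : L, ⁅Y, X⁆ = 0 ↔ g₀ Y ∈ H₀ := by
    intro Y
    have hiff : g₀ Y ∈ H₀ ↔ ⁅g₀ Y, X₀⁆ = 0 := by
      rw [hmemker X₀ (g₀ Y)]
      exact hflip X₀ (g₀ Y)
    rw [hiff]
    constructor
    · intro h
      have h1 : g₀ ⁅Y, X⁆ = 0 := by rw [h, map_zero]
      rwa [hbrk, hgX] at h1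
    · intro h
      have h2 : g₀ ⁅Y, X⁆ = g₀ 0 := by rw [hbrk, hgX, h, map_zero]
      exact hg₀inj h2
  have hXcen : ∀ Y : L, Y ∈ cenAlg X ↔ ⁅Y, X⁆ = 0 := fun Y => Iff.rfl
  have habelX : ∀ Y Z : L, ⁅Y, X⁆ = 0 → ⁅Z, X⁆ = 0 → ⁅Y, Z⁆ = 0 := by
    intro Y Z hY hZ
    have h1 : g₀ Y ∈ H₀ := (hcen Y).mp hY
    have h2 : g₀ Z ∈ H₀ := (hcen Z).mp hZ
    have h3 : ⁅g₀ Y, g₀ Z⁆ = (0 : L) := habelL _ h1 _ h2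
    have h4 : g₀ ⁅Y, Z⁆ = g₀ 0 := by rw [hbrk, h3, map_zero]
    exact hg₀inj h4
  have hCSA : IsCSA (cenAlg X) := by
    constructor
    · constructor
      intro a b
      have h0 : (⁅a, b⁆ : cenAlg X) = ⟨⁅(a : L), (b : L)⁆, (cenAlg X).lie_mem a.2 b.2⟩ := rfl
      have h1 : ⁅(a : L), (b : L)⁆ = 0 :=
        habelX _ _ ((hXcen _).mp a.2) ((hXcen _).mp b.2)
      exact Subtype.ext (by rw [h0]; exact h1)
    · intro H' hH' hle
      refine le_antisymm hle ?_
      intro Z hZ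
      have hXmem : X ∈ cenAlg X := (hXcen X).mpr (lie_self X)
      have hXH' : X ∈ H' := hle hXmem
      have h3 := hH'.trivial ⟨Z, hZ⟩ ⟨X, hXH'⟩
      have h4 : ⁅Z, X⁆ = (0 : L) := by
        have h5 := congrArg (Subtype.val) h3
        rw [LieSubalgebra.coe_bracket] at h5
        simpa using h5
      exact (hXcen Z).mpr h4
  have horthA : ∀ u : L, ⁅u, X⁆ = 0 → ⟪A, u⟫ = 0 := by
    intro u hu
    have h1 : g₀ u ∈ H₀ := (hcen u).mp hu
    have h2 : ⟪g₀ A, g₀ u⟫ = ⟪A, u⟫ := hg₀Good.2 A u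
    have h3 : ⟪g₀ u, B⟫ = 0 := hBorth (g₀ u) h1
    rw [← h2, real_inner_comm]
    exact h3
  constructor
  · refine ⟨cenAlg X, hCSA, ?_⟩
    intro u hmem
    have h1 : ⟪A, u⟫ = 0 := horthA u ((hXcen u).mp hmem)
    rw [hinner] at h1
    linarith
  · refine ⟨X, hCSA, ?_⟩
    have hrange := skew_range_eq_ker_orthogonal (ad ℝ L X : L →ₗ[ℝ] L) (hadskew X)
    have hmem : A ∈ (LinearMap.ker (ad ℝ L X : L →ₗ[ℝ] L))ᗮ := by
      intro u hu
      have hu' : ⁅X, u⁆ = 0 := hu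
      have hu2 : ⁅u, X⁆ = 0 := (hflip X u).mp hu'
      have h := horthA u hu2
      rwa [real_inner_comm] at h
    show A ∈ LinearMap.range (ad ℝ L X : L →ₗ[ℝ] L)
    rw [hrange]
    exact hmem
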